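/- tan(4π/11) + 4·sin(π/11) = √11. -/

import Mathlib

/-! With `θ = π / 11` we have `cos 6θ = -cos 5θ`; expanding both sides as polynomials in
`c = cos θ` and cancelling the factor `c + 1` shows that `c` is a root of the quintic
`32c⁵ - 16c⁴ - 32c³ + 12c² + 6c - 1`. Writing `tan 4θ + 4 sin θ` in terms of `c` and `s = sin θ`,
its square reduces to `11` modulo this quintic and `s² = 1 - c²`. Both summands are positive,
so the sum is the positive square root. -/

open Real

lemma Real.cos_five_mul (x : ℝ) : cos (5 * x) = 16 * cos x ^ 5 - 20 * cos x ^ 3 + 5 * cos x := by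
  rw [show 5 * x = 3 * x + 2 * x by ring, cos_add, cos_three_mul, cos_two_mul, sin_three_mul,
    sin_two_mul]
  linear_combination (8 * sin x ^ 2 * cos x - 8 * cos x ^ 3 + 2 * cos x) * sin_sq_add_cos_sq x

lemma Real.cos_six_mul (x : ℝ) :
    cos (6 * x) = 32 * cos x ^ 6 - 48 * cos x ^ 4 + 18 * cos x ^ 2 - 1 := by
  rw [show 6 * x = 2 * (3 * x) by ring, cos_two_mul, cos_three_mul]
  ring

lemma cos_pi_div_eleven_quintic :
    32 * cos (π / 11) ^ 5 - 16 * cos (π / 11) ^ 4 - 32 * cos (π / 11) ^ 3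
      + 12 * cos (π / 11) ^ 2 + 6 * cos (π / 11) - 1 = 0 := by
  have hsupp : cos (6 * (π / 11)) = -cos (5 * (π / 11)) := by
    rw [← cos_pi_sub]; ring_nf
  rw [cos_five_mul, cos_six_mul] at hsupp
  have hc : 0 < cos (π / 11) := cos_pos_of_mem_Ioo ⟨by linarith [pi_pos], by linarith [pi_pos]⟩
  have hc1 : cos (π / 11) + 1 ≠ 0 := by positivity
  refine (mul_eq_zero.mp ?_).resolve_left hc1
  linear_combination hsupp

lemma sq_tan_four_mul_add_four_sin (θ : ℝ) (hcos : cos (4 * θ) ≠ 0)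
    (hθ : 32 * cos θ ^ 5 - 16 * cos θ ^ 4 - 32 * cos θ ^ 3 + 12 * cos θ ^ 2 + 6 * cos θ - 1 = 0) :
    (tan (4 * θ) + 4 * sin θ) ^ 2 = 11 := by
  have hsin4 : sin (4 * θ) = 4 * sin θ * cos θ * (2 * cos θ ^ 2 - 1) := by
    rw [show 4 * θ = 2 * (2 * θ) by ring, sin_two_mul, sin_two_mul, cos_two_mul]; ring
  have hcos4 : cos (4 * θ) = 8 * cos θ ^ 4 - 8 * cos θ ^ 2 + 1 := by
    rw [show 4 * θ = 2 * (2 * θ) by ring, cos_two_mul, cos_two_mul]; ring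
  rw [tan_eq_sin_div_cos, div_add' _ _ _ hcos, div_pow, div_eq_iff (pow_ne_zero 2 hcos), hsin4,
    hcos4]
  linear_combination
    (32 * cos θ ^ 4 + 8 * cos θ ^ 3 - 32 * cos θ ^ 2 - 4 * cos θ + 4) ^ 2 * sin_sq_add_cos_sq θ
    + (-32 * cos θ ^ 5 - 32 * cos θ ^ 4 + 24 * cos θ ^ 3 + 32 * cos θ ^ 2 + 2 * cos θ - 5) * hθ

theorem stmt2 : Real.tan (4*Real.pi/11) + 4*Real.sin (Real.pi/11) = Real.sqrt 11 := by
  have hpi := pi_pos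
  rw [show 4 * π / 11 = 4 * (π / 11) by ring]
  have hcos : 0 < cos (4 * (π / 11)) := cos_pos_of_mem_Ioo ⟨by linarith, by linarith⟩
  have hpos : 0 < tan (4 * (π / 11)) + 4 * sin (π / 11) := by
    have htan : 0 < tan (4 * (π / 11)) :=
      tan_pos_of_pos_of_lt_pi_div_two (by positivity) (by linarith)
    have hsin : 0 < sin (π / 11) := sin_pos_of_pos_of_lt_pi (by positivity) (by linarith)
    positivity
  rw [← sqrt_sq hpos.le, sq_tan_four_mul_add_four_sin _ hcos.ne' cos_pi_div_eleven_quintic]
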